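/- arXiv:1604.07656 — 12 statements merged into one kernel-verified Lean document; each statement's English description precedes it below -/
import Mathlib

section
/- A proper submodule N of an R-module M is (k,n)-closed if and only if for every r ∈ R and every submodule L of M with r^k • L ⊆ N, either r^(n-1) • L ⊆ N or r^n ∈ (N :ᵣ M). -/
open Submodule

lemma Submodule.smul_mem_of_mem_span_singleton {R M : Type*} [CommSemiring R]
    [AddCommMonoid M] [Module R M] {N : Submodule R M} {s : R} {m x : M}
    (hm : s • m ∈ N) (hx : x ∈ span R {m}) : s • x ∈ N := by
  obtain ⟨c, rfl⟩ := mem_span_singleton.1 hx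
  rw [smul_comm]
  exact N.smul_mem c hm

theorem stmt_0_general {R M : Type*} [CommRing R] [AddCommGroup M] [Module R M]
    (k n : ℕ) (N : Submodule R M) :
    (∀ (r : R) (m : M), r ^ k • m ∈ N →
        (∀ x : M, r ^ n • x ∈ N) ∨ r ^ (n - 1) • m ∈ N) ↔
    (∀ (r : R) (L : Submodule R M), (∀ x ∈ L, r ^ k • x ∈ N) →
        (∀ x ∈ L, r ^ (n - 1) • x ∈ N) ∨ (∀ x : M, r ^ n • x ∈ N)) := by
  constructor
  · intro h r L hL
    refine or_iff_not_imp_left.2 fun hfail => ?_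
    obtain ⟨x, hxL, hx⟩ := not_forall₂.1 hfail
    exact (h r x (hL x hxL)).resolve_right hx
  · intro h r m hm
    exact (h r (span R {m}) fun x hx => smul_mem_of_mem_span_singleton hm hx).symm.imp_right
      fun hspan => hspan m (mem_span_singleton_self m)

/-- A proper submodule N of an R-module M is (k,n)-closed iff for every
r ∈ R and every submodule L of M with r^k • L ⊆ N, either r^(n-1) • L ⊆ N or
r^n ∈ (N :ᵣ M). -/
theorem stmt_0 {R M : Type*} [CommRing R] [Nontrivial R] [AddCommGroup M] [Module R M]
    (k n : ℕ) (hk : 0 < k) (hn : 0 < n) (N : Submodule R M) (hN : N ≠ ⊤) :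
    (∀ (r : R) (m : M), r ^ k • m ∈ N →
        (∀ x : M, r ^ n • x ∈ N) ∨ r ^ (n - 1) • m ∈ N) ↔
    (∀ (r : R) (L : Submodule R M), (∀ x ∈ L, r ^ k • x ∈ N) →
        (∀ x ∈ L, r ^ (n - 1) • x ∈ N) ∨ (∀ x : M, r ^ n • x ∈ N)) :=
  stmt_0_general k n N
end

section
/- If N is a (k,n)-closed submodule of an R-module M, then the colon ideal (N :ᵣ M) is a (k,n)-closed ideal of R, i.e., for all r ∈ R, r^k ∈ (N :ᵣ M) implies r^n ∈ (N :ᵣ M). -/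
theorem stmt_1_general {R M : Type*} [CommRing R] [AddCommGroup M] [Module R M]
    (k n : ℕ) (hn : 0 < n) (N : Submodule R M)
    (hclosed : ∀ (r : R) (m : M), r ^ k • m ∈ N →
        (∀ x : M, r ^ n • x ∈ N) ∨ r ^ (n - 1) • m ∈ N) :
    ∀ r : R, (∀ x : M, r ^ k • x ∈ N) → (∀ x : M, r ^ n • x ∈ N) := by
  intro r hr x
  rcases hclosed r (r • x) (hr (r • x)) with hcolon | hmem
  · exact hcolon x
  · rwa [smul_smul, ← pow_succ, Nat.sub_add_cancel hn] at hmem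

/-- If N is a (k,n)-closed submodule of M, then (N :ᵣ M) is a
(k,n)-closed ideal of R. -/
theorem stmt_1 {R M : Type*} [CommRing R] [Nontrivial R] [AddCommGroup M] [Module R M]
    (k n : ℕ) (hk : 0 < k) (hn : 0 < n) (N : Submodule R M) (hN : N ≠ ⊤)
    (hclosed : ∀ (r : R) (m : M), r ^ k • m ∈ N →
        (∀ x : M, r ^ n • x ∈ N) ∨ r ^ (n - 1) • m ∈ N) :
    ∀ r : R, (∀ x : M, r ^ k • x ∈ N) → (∀ x : M, r ^ n • x ∈ N) :=
  stmt_1_general k n hn N hclosed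
end

section
/- The submodule 6ℤ of the ℤ-module ℤ satisfies that (6ℤ :ℤ ℤ) = 6ℤ is a (2,1)-closed ideal of ℤ, but 6ℤ is not a (2,1)-closed submodule of ℤ (witnessed by 2^2 · 3^2 ∈ 6ℤ while 2 ∉ 6ℤ and 3^2 ∉ 6ℤ). -/
/-! In `ℤ` the colon ideal `(6ℤ :ℤ ℤ)` is `6ℤ` itself, which is (2,1)-closed because `6` is
squarefree. The submodule condition fails since `r ^ 2 • m = 36 ∈ 6ℤ` for `r = 2`, `m = 9`:
the factor `3` of `6` comes from `m` and the factor `2` from `r`, so neither `r` nor `m` alone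
lies in `6ℤ`. -/

theorem Ideal.forall_smul_mem_iff {R : Type*} [CommSemiring R] (I : Ideal R) (r : R) :
    (∀ x : R, r • x ∈ I) ↔ r ∈ I :=
  ⟨fun h ↦ by simpa using h 1, fun hr x ↦ I.mul_mem_right x hr⟩

theorem Squarefree.sq_mem_span_singleton_iff {R : Type*} [CommSemiring R] [DecompositionMonoid R]
    {a : R} (ha : Squarefree a) (x : R) :
    x ^ 2 ∈ Ideal.span {a} ↔ x ∈ Ideal.span {a} := by
  simp only [Ideal.mem_span_singleton, ha.dvd_pow_iff_dvd two_ne_zero]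

theorem Int.squarefree_six : Squarefree (6 : ℤ) := by
  rw [show (6 : ℤ) = ((6 : ℕ) : ℤ) from rfl, Int.squarefree_natCast]
  exact (Nat.squarefree_mul (by norm_num)).2
    ⟨Nat.prime_two.squarefree, Nat.prime_three.squarefree⟩

/-- 6ℤ as a submodule of the ℤ-module ℤ: (6ℤ :ℤ ℤ) = 6ℤ is a (2,1)-closed
ideal of ℤ, but 6ℤ is not a (2,1)-closed submodule of ℤ. -/
theorem stmt_2 :
    (∀ x : ℤ, x ^ 2 ∈ Ideal.span ({6} : Set ℤ) → x ∈ Ideal.span ({6} : Set ℤ)) ∧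
    ¬ (∀ (r m : ℤ), r ^ 2 • m ∈ Ideal.span ({6} : Set ℤ) →
        (∀ x : ℤ, r • x ∈ Ideal.span ({6} : Set ℤ)) ∨ m ∈ Ideal.span ({6} : Set ℤ)) ∧
    (2 : ℤ) ^ 2 • (3 : ℤ) ^ 2 ∈ Ideal.span ({6} : Set ℤ) ∧
    ¬ (∀ x : ℤ, (2 : ℤ) • x ∈ Ideal.span ({6} : Set ℤ)) ∧
    (3 : ℤ) ^ 2 ∉ Ideal.span ({6} : Set ℤ) := by
  have hmem : (2 : ℤ) ^ 2 • (3 : ℤ) ^ 2 ∈ Ideal.span ({6} : Set ℤ) := by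
    rw [Ideal.mem_span_singleton]; decide
  have hr : ¬ ∀ x : ℤ, (2 : ℤ) • x ∈ Ideal.span ({6} : Set ℤ) := by
    rw [Ideal.forall_smul_mem_iff, Ideal.mem_span_singleton]; decide
  have hm : (3 : ℤ) ^ 2 ∉ Ideal.span ({6} : Set ℤ) := by
    rw [Ideal.mem_span_singleton]; decide
  refine ⟨fun x ↦ (Int.squarefree_six.sq_mem_span_singleton_iff x).1, fun h ↦ ?_, hmem, hr, hm⟩
  exact (h 2 (3 ^ 2) hmem).elim hr hm
end

section
/- If N is a (k,n)-closed submodule of an R-module M, then for each m ∈ M \ N the colon ideal (N :ᵣ m) = {r ∈ R : r • m ∈ N} is a (k,n)-closed ideal of R. -/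
theorem stmt_3_general {R M : Type*} [CommRing R] [AddCommGroup M] [Module R M]
    (k n : ℕ) (hn : 0 < n) (N : Submodule R M)
    (hclosed : ∀ (r : R) (m : M), r ^ k • m ∈ N →
        (∀ x : M, r ^ n • x ∈ N) ∨ r ^ (n - 1) • m ∈ N) :
    ∀ m : M, m ∉ N → ∀ r : R, r ^ k • m ∈ N → r ^ n • m ∈ N := by
  intro m _ r hr
  rcases hclosed r m hr with hall | hpred
  · exact hall m
  · obtain ⟨n, rfl⟩ := Nat.exists_eq_add_one_of_ne_zero hn.ne'
    simpa only [Nat.add_sub_cancel, pow_succ', mul_smul] using N.smul_mem r hpred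

/-- If N is a (k,n)-closed submodule of M, then for each m ∈ M \ N
the ideal (N :ᵣ m) is a (k,n)-closed ideal of R. -/
theorem stmt_3 {R M : Type*} [CommRing R] [Nontrivial R] [AddCommGroup M] [Module R M]
    (k n : ℕ) (hk : 0 < k) (hn : 0 < n) (N : Submodule R M) (hN : N ≠ ⊤)
    (hclosed : ∀ (r : R) (m : M), r ^ k • m ∈ N →
        (∀ x : M, r ^ n • x ∈ N) ∨ r ^ (n - 1) • m ∈ N) :
    ∀ m : M, m ∉ N → ∀ r : R, r ^ k • m ∈ N → r ^ n • m ∈ N :=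
  stmt_3_general k n hn N hclosed
end

section
/- Let M be a finitely generated R-module generated by m₁, ..., m_t and N a proper submodule of M with k > n. If (N :ᵣ m_i) is a (k,n)-closed ideal of R for all i = 1, ..., t, then (N :ᵣ M) is a (k,n)-closed ideal of R. -/
theorem Submodule.smul_mem_of_span_eq_top {R M : Type*} [CommSemiring R] [AddCommMonoid M]
    [Module R M] {s : Set M} (hs : Submodule.span R s = ⊤) {N : Submodule R M} {a : R}
    (ha : ∀ y ∈ s, a • y ∈ N) (x : M) : a • x ∈ N :=
  (Submodule.span_le (p := N.comap (LinearMap.lsmul R M a))).2 ha (hs ▸ Submodule.mem_top)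

theorem stmt_5_general {R M : Type*} [CommRing R] [AddCommGroup M] [Module R M]
    (k n : ℕ) (t : ℕ) (m : Fin t → M)
    (hgen : Submodule.span R (Set.range m) = ⊤)
    (N : Submodule R M)
    (h : ∀ i : Fin t, ∀ r : R, r ^ k • m i ∈ N → r ^ n • m i ∈ N) :
    ∀ r : R, (∀ x : M, r ^ k • x ∈ N) → (∀ x : M, r ^ n • x ∈ N) := fun r hk =>
  Submodule.smul_mem_of_span_eq_top hgen <| Set.forall_mem_range.2 fun i => h i r (hk (m i))

/-- If M is generated by m₁, ..., m_t, N is a proper submodule, k > n,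
and each (N :ᵣ mᵢ) is a (k,n)-closed ideal, then (N :ᵣ M) is a (k,n)-closed ideal. -/
theorem stmt_5 {R M : Type*} [CommRing R] [Nontrivial R] [AddCommGroup M] [Module R M]
    (k n : ℕ) (hn : 0 < n) (hkn : k > n) (t : ℕ) (m : Fin t → M)
    (hgen : Submodule.span R (Set.range m) = ⊤)
    (N : Submodule R M) (hN : N ≠ ⊤)
    (h : ∀ i : Fin t, ∀ r : R, r ^ k • m i ∈ N → r ^ n • m i ∈ N) :
    ∀ r : R, (∀ x : M, r ^ k • x ∈ N) → (∀ x : M, r ^ n • x ∈ N) :=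
  stmt_5_general k n t m hgen N h
end

section
/- Let N be a proper submodule of an R-module M with k > n. Then N is a (k,n)-closed submodule of M if and only if for all r ∈ R and m ∈ M, either (N :ᵣ r^k • m) = (N :ᵣ r^(n-1) • m) or r^n ∈ (N :ᵣ M). -/
theorem Submodule.pow_smul_mem_of_le {R M : Type*} [CommSemiring R] [AddCommMonoid M]
    [Module R M] (N : Submodule R M) {r : R} {a b : ℕ} (hab : a ≤ b) {m : M}
    (h : r ^ a • m ∈ N) : r ^ b • m ∈ N := by
  obtain ⟨c, rfl⟩ := Nat.exists_eq_add_of_le hab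
  rw [pow_add, mul_comm, mul_smul]
  exact N.smul_mem _ h

theorem stmt_6_general {R M : Type*} [CommRing R] [AddCommGroup M] [Module R M]
    (k n : ℕ) (hkn : k > n) (N : Submodule R M) :
    (∀ (r : R) (m : M), r ^ k • m ∈ N →
        (∀ x : M, r ^ n • x ∈ N) ∨ r ^ (n - 1) • m ∈ N) ↔
    (∀ (r : R) (m : M),
        (∀ s : R, s • (r ^ k • m) ∈ N ↔ s • (r ^ (n - 1) • m) ∈ N) ∨
        (∀ x : M, r ^ n • x ∈ N)) := by
  constructor
  · intro h r m
    refine or_iff_not_imp_right.2 fun hr s => ?_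
    rw [smul_comm s, smul_comm s]
    exact ⟨fun hs => (h r (s • m) hs).resolve_left hr, N.pow_smul_mem_of_le (by omega)⟩
  · intro h r m hm
    refine (h r m).symm.imp id fun hcolon => ?_
    simpa using (hcolon 1).mp (by simpa using hm)

/-- For k > n, N is (k,n)-closed iff for all r, m either
(N :ᵣ r^k • m) = (N :ᵣ r^(n-1) • m) or r^n ∈ (N :ᵣ M). -/
theorem stmt_6 {R M : Type*} [CommRing R] [Nontrivial R] [AddCommGroup M] [Module R M]
    (k n : ℕ) (hn : 0 < n) (hkn : k > n) (N : Submodule R M) (hN : N ≠ ⊤) :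
    (∀ (r : R) (m : M), r ^ k • m ∈ N →
        (∀ x : M, r ^ n • x ∈ N) ∨ r ^ (n - 1) • m ∈ N) ↔
    (∀ (r : R) (m : M),
        (∀ s : R, s • (r ^ k • m) ∈ N ↔ s • (r ^ (n - 1) • m) ∈ N) ∨
        (∀ x : M, r ^ n • x ∈ N)) :=
  stmt_6_general k n hkn N
end

section
/- If N is a semi n-absorbing submodule of an R-module M and n₁ ≥ n, then N is a semi n₁-absorbing submodule of M. -/
def Submodule.IsSemiAbsorbing {R M : Type*} [CommSemiring R] [AddCommMonoid M] [Module R M]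
    (N : Submodule R M) (n : ℕ) : Prop :=
  ∀ (r : R) (m : M), r ^ n • m ∈ N → (∀ x : M, r ^ n • x ∈ N) ∨ r ^ (n - 1) • m ∈ N

namespace Submodule.IsSemiAbsorbing

variable {R M : Type*} [CommSemiring R] [AddCommMonoid M] [Module R M] {N : Submodule R M}

/-- Apply the `n`-condition to `r ^ (n₁ - n) • m`; `0 < n` makes `n - 1 + (n₁ - n) = n₁ - 1`. -/
theorem mono {n n₁ : ℕ} (hN : N.IsSemiAbsorbing n) (hn : 0 < n) (hnn : n ≤ n₁) :
    N.IsSemiAbsorbing n₁ := by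
  intro r m hm
  obtain ⟨k, rfl⟩ := Nat.exists_eq_add_of_le hnn
  rw [pow_add, mul_smul] at hm
  rcases hN r (r ^ k • m) hm with hcolon | hmem
  · exact .inl fun x => by simpa only [pow_add, mul_smul] using hcolon (r ^ k • x)
  · rw [← mul_smul, ← pow_add, ← Nat.sub_add_comm hn] at hmem
    exact .inr hmem

end Submodule.IsSemiAbsorbing

theorem stmt_9_general {R M : Type*} [CommRing R] [AddCommGroup M] [Module R M]
    (n n₁ : ℕ) (hn : 0 < n) (hnn : n₁ ≥ n) (N : Submodule R M)
    (hsa : ∀ (r : R) (m : M), r ^ n • m ∈ N →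
        (∀ x : M, r ^ n • x ∈ N) ∨ r ^ (n - 1) • m ∈ N) :
    ∀ (r : R) (m : M), r ^ n₁ • m ∈ N →
      (∀ x : M, r ^ n₁ • x ∈ N) ∨ r ^ (n₁ - 1) • m ∈ N :=
  Submodule.IsSemiAbsorbing.mono hsa hn hnn

/-- A semi n-absorbing submodule is semi n₁-absorbing for all n₁ ≥ n. -/
theorem stmt_9 {R M : Type*} [CommRing R] [Nontrivial R] [AddCommGroup M] [Module R M]
    (n n₁ : ℕ) (hn : 0 < n) (hnn : n₁ ≥ n) (N : Submodule R M) (hN : N ≠ ⊤)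
    (hsa : ∀ (r : R) (m : M), r ^ n • m ∈ N →
        (∀ x : M, r ^ n • x ∈ N) ∨ r ^ (n - 1) • m ∈ N) :
    ∀ (r : R) (m : M), r ^ n₁ • m ∈ N →
      (∀ x : M, r ^ n₁ • x ∈ N) ∨ r ^ (n₁ - 1) • m ∈ N :=
  stmt_9_general n n₁ hn hnn N hsa
end

section
/- If N is a quasi-prime submodule of an R-module M, then N is a (k,n)-closed submodule of M for all positive integers k ≥ n ≥ 2. -/
/-! Quasi-primeness applied to `r * r ^ j` peels off one factor of `r` at a time, so
`r ^ k • m ∈ N` with `k ≥ 1` already gives `r • m ∈ N`; multiplying by `r ^ (n - 2)`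
then yields `r ^ (n - 1) • m ∈ N`. -/

theorem Submodule.smul_mem_of_pow_smul_mem {R M : Type*} [CommSemiring R] [AddCommMonoid M]
    [Module R M] {N : Submodule R M}
    (hqp : ∀ (a b : R) (m : M), (a * b) • m ∈ N → a • m ∈ N ∨ b • m ∈ N)
    {r : R} {m : M} {k : ℕ} (hk : 1 ≤ k) (h : r ^ k • m ∈ N) : r • m ∈ N := by
  induction k, hk using Nat.le_induction with
  | base => simpa using h
  | succ k _ ih =>
    rw [pow_succ'] at h
    exact (hqp r (r ^ k) m h).elim id ih

theorem stmt_10_general {R M : Type*} [CommRing R] [AddCommGroup M] [Module R M]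
    (N : Submodule R M)
    (hqp : ∀ (a b : R) (m : M), (a * b) • m ∈ N → a • m ∈ N ∨ b • m ∈ N) :
    ∀ (k n : ℕ), k ≥ n → n ≥ 2 →
      ∀ (r : R) (m : M), r ^ k • m ∈ N →
        (∀ x : M, r ^ n • x ∈ N) ∨ r ^ (n - 1) • m ∈ N := by
  intro k n hkn hn r m hkm
  right
  obtain ⟨j, rfl⟩ : ∃ j, n = j + 2 := ⟨n - 2, by omega⟩
  have hrm : r • m ∈ N := N.smul_mem_of_pow_smul_mem hqp (by omega) hkm
  rw [show j + 2 - 1 = j + 1 from rfl, pow_succ, mul_smul]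
  exact N.smul_mem (r ^ j) hrm

/-- A quasi-prime submodule is (k,n)-closed for all k ≥ n ≥ 2. -/
theorem stmt_10 {R M : Type*} [CommRing R] [Nontrivial R] [AddCommGroup M] [Module R M]
    (N : Submodule R M) (hN : N ≠ ⊤)
    (hqp : ∀ (a b : R) (m : M), (a * b) • m ∈ N → a • m ∈ N ∨ b • m ∈ N) :
    ∀ (k n : ℕ), k ≥ n → n ≥ 2 →
      ∀ (r : R) (m : M), r ^ k • m ∈ N →
        (∀ x : M, r ^ n • x ∈ N) ∨ r ^ (n - 1) • m ∈ N :=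
  stmt_10_general N hqp
end

section
/- If N is a semi n-absorbing submodule of an R-module M, then N is a (k,n)-closed submodule of M for every positive integer k. -/
/-! If `r ^ k • m ∈ N` with `k > n`, then `r ^ n • (r ^ (k - n) • m) ∈ N`, so semi `n`-absorption
either makes `r ^ n` absorb `M` into `N` or gives `r ^ (k - 1) • m ∈ N`; descending on `k` reaches
`k ≤ n`, where `r ^ n • m ∈ N` and semi `n`-absorption applies directly. -/

namespace Submodule

variable {R M : Type*} [Semiring R] [AddCommMonoid M] [Module R M]

/-- `(k,n)`-closedness without the properness requirement; semi `n`-absorbing is `IsKNClosed N n n`. -/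
def IsKNClosed (N : Submodule R M) (k n : ℕ) : Prop :=
  ∀ (r : R) (m : M), r ^ k • m ∈ N → (∀ x : M, r ^ n • x ∈ N) ∨ r ^ (n - 1) • m ∈ N

variable {N : Submodule R M}

theorem pow_smul_mem_of_le_s11 {r : R} {m : M} {k j : ℕ} (hkj : k ≤ j) (h : r ^ k • m ∈ N) :
    r ^ j • m ∈ N := by
  rw [← pow_sub_mul_pow r hkj, mul_smul]
  exact N.smul_mem _ h

theorem IsKNClosed.anti {k j n : ℕ} (hkj : k ≤ j) (hN : N.IsKNClosed j n) : N.IsKNClosed k n :=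
  fun r m h => hN r m (pow_smul_mem_of_le_s11 hkj h)

theorem IsKNClosed.succ {j n : ℕ} (hN : N.IsKNClosed j n) (hn : 0 < n) (hnj : n ≤ j)
    (hsa : N.IsKNClosed n n) : N.IsKNClosed (j + 1) n := by
  intro r m h
  have hshift : r ^ n • r ^ (j + 1 - n) • m ∈ N := by
    rwa [← mul_smul, ← pow_add, Nat.add_sub_cancel' (by omega)]
  refine (hsa r _ hshift).elim Or.inl fun h' => hN r m ?_
  rwa [← mul_smul, ← pow_add, show n - 1 + (j + 1 - n) = j by omega] at h'

theorem IsKNClosed.of_self {n : ℕ} (hn : 0 < n) (hsa : N.IsKNClosed n n) (k : ℕ) :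
    N.IsKNClosed k n := by
  rcases le_total k n with hkn | hnk
  · exact hsa.anti hkn
  · induction k, hnk using Nat.le_induction with
    | base => exact hsa
    | succ j hnj ih => exact ih.succ hn hnj hsa

end Submodule

theorem stmt_11_general {R M : Type*} [CommRing R] [AddCommGroup M] [Module R M]
    (k n : ℕ) (hn : 0 < n) (N : Submodule R M)
    (hsa : ∀ (r : R) (m : M), r ^ n • m ∈ N →
        (∀ x : M, r ^ n • x ∈ N) ∨ r ^ (n - 1) • m ∈ N) :
    ∀ (r : R) (m : M), r ^ k • m ∈ N →
      (∀ x : M, r ^ n • x ∈ N) ∨ r ^ (n - 1) • m ∈ N :=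
  Submodule.IsKNClosed.of_self hn hsa k

/-- A semi n-absorbing submodule is (k,n)-closed for every positive k. -/
theorem stmt_11 {R M : Type*} [CommRing R] [Nontrivial R] [AddCommGroup M] [Module R M]
    (k n : ℕ) (hk : 0 < k) (hn : 0 < n) (N : Submodule R M) (hN : N ≠ ⊤)
    (hsa : ∀ (r : R) (m : M), r ^ n • m ∈ N →
        (∀ x : M, r ^ n • x ∈ N) ∨ r ^ (n - 1) • m ∈ N) :
    ∀ (r : R) (m : M), r ^ k • m ∈ N →
      (∀ x : M, r ^ n • x ∈ N) ∨ r ^ (n - 1) • m ∈ N :=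
  stmt_11_general k n hn N hsa
end

section
/- Let R be a valuation domain with quotient field K, M an R-module, and N a proper submodule of M. If N is a semi n-absorbing submodule of M and r ∈ K, m ∈ M are such that r^(n+1) • m ∈ N (where the action makes sense), then r^n • m ∈ N. -/
/-! Since `R` is a valuation ring, a nonzero `r ∈ K` lies in `R` or has `r⁻¹ ∈ R`. If `r ∈ R`,
the semi `n`-absorbing property applied to `r ^ n • (r • m)` gives `r ^ n • m ∈ N` in both of
its alternatives. If `r⁻¹ ∈ R`, then `r ^ n • m = r⁻¹ • r ^ (n + 1) • m` lies in the
`R`-submodule `N`. -/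

namespace Submodule

theorem pow_smul_mem_of_pow_succ_smul_mem {R M : Type*} [CommSemiring R] [AddCommMonoid M]
    [Module R M] {n : ℕ} (hn : 0 < n) {N : Submodule R M}
    (hsa : ∀ (s : R) (m : M), s ^ n • m ∈ N →
        (∀ x : M, s ^ n • x ∈ N) ∨ s ^ (n - 1) • m ∈ N)
    {s : R} {m : M} (h : s ^ (n + 1) • m ∈ N) : s ^ n • m ∈ N := by
  rw [pow_succ, mul_smul] at h
  rcases hsa s (s • m) h with hall | hpred
  · exact hall m
  · rwa [← Nat.sub_add_cancel hn, pow_succ, mul_smul]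

theorem pow_smul_mem_of_algebraMap_eq_inv {R K M : Type*} [CommSemiring R] [Field K]
    [Algebra R K] [AddCommMonoid M] [Module K M] [Module R M] [IsScalarTower R K M]
    (N : Submodule R M) {r : K} (hr : r ≠ 0) {t : R} (ht : algebraMap R K t = r⁻¹)
    {n : ℕ} {m : M} (h : r ^ (n + 1) • m ∈ N) : r ^ n • m ∈ N := by
  have hrn : r ^ n • m = t • r ^ (n + 1) • m := by
    rw [← algebraMap_smul K t, smul_smul, ht, pow_succ', inv_mul_cancel_left₀ hr]
  rw [hrn]
  exact N.smul_mem t h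

end Submodule

theorem stmt_17_general {R : Type*} [CommRing R] [IsDomain R] [ValuationRing R]
    {M : Type*} [AddCommGroup M] [Module (FractionRing R) M] [Module R M]
    [IsScalarTower R (FractionRing R) M]
    (n : ℕ) (hn : 0 < n) (N : Submodule R M)
    (hsa : ∀ (s : R) (m : M), s ^ n • m ∈ N →
        (∀ x : M, s ^ n • x ∈ N) ∨ s ^ (n - 1) • m ∈ N) :
    ∀ (r : FractionRing R) (m : M), r ^ (n + 1) • m ∈ N → r ^ n • m ∈ N := by
  intro r m hrm
  rcases eq_or_ne r 0 with rfl | hr0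
  · simp [zero_pow hn.ne']
  rcases ValuationRing.isInteger_or_isInteger R r with ⟨s, rfl⟩ | ⟨t, ht⟩
  · simp only [← map_pow, algebraMap_smul] at hrm ⊢
    exact N.pow_smul_mem_of_pow_succ_smul_mem hn hsa hrm
  · exact N.pow_smul_mem_of_algebraMap_eq_inv hr0 ht hrm

/-- Over a valuation domain R with fraction field K, if N is a semi
n-absorbing R-submodule of a K-module M, r ∈ K and m ∈ M with r^(n+1) • m ∈ N,
then r^n • m ∈ N. -/
theorem stmt_17 {R : Type*} [CommRing R] [IsDomain R] [ValuationRing R]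
    {M : Type*} [AddCommGroup M] [Module (FractionRing R) M] [Module R M]
    [IsScalarTower R (FractionRing R) M]
    (n : ℕ) (hn : 0 < n) (N : Submodule R M) (hN : N ≠ ⊤)
    (hsa : ∀ (s : R) (m : M), s ^ n • m ∈ N →
        (∀ x : M, s ^ n • x ∈ N) ∨ s ^ (n - 1) • m ∈ N) :
    ∀ (r : FractionRing R) (m : M), r ^ (n + 1) • m ∈ N → r ^ n • m ∈ N :=
  stmt_17_general n hn N hsa
end

section
/- Let R be a principal ideal domain and N a proper submodule of an R-module M. Then N is a (k,n)-closed submodule of M if and only if N is a strongly (k,n)-closed submodule of M, i.e., for every ideal I of R and submodule L of M, I^k • L ⊆ N implies I^n ⊆ (N :ᵣ M) or I^(n-1) • L ⊆ N. -/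
/-!
Every ideal of a PID is principal, `I = (r)`, so `I ^ j = (r ^ j)` and `I ^ j • L ≤ N` just says
that `r ^ j • m ∈ N` for all `m ∈ L`. For `I = (r)` the first alternative, `r ^ n • M ⊆ N`, does not
depend on `m`, so the elementwise condition applied to each `m ∈ L` gives the ideal-theoretic one;
conversely, the ideal-theoretic condition for `I = (r)` and `L = R ∙ m` is the elementwise one.
-/

open scoped Pointwise

namespace Submodule

variable {R M : Type*} [CommSemiring R] [AddCommMonoid M] [Module R M]

theorem ideal_span_singleton_smul_le_iff (a : R) (L N : Submodule R M) :
    Ideal.span {a} • L ≤ N ↔ ∀ m ∈ L, a • m ∈ N := by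
  rw [ideal_span_singleton_smul, ← SetLike.coe_subset_coe, coe_pointwise_smul]
  exact Set.smul_set_subset_iff

theorem ideal_span_singleton_smul_span_singleton_le_iff (a : R) (m : M) (N : Submodule R M) :
    Ideal.span {a} • (R ∙ m) ≤ N ↔ a • m ∈ N := by
  rw [ideal_span_singleton_smul, smul_span, Set.smul_set_singleton, span_singleton_le_iff_mem]

theorem forall_mem_ideal_span_singleton_smul_mem_iff (a : R) (N : Submodule R M) :
    (∀ s ∈ Ideal.span {a}, ∀ x : M, s • x ∈ N) ↔ ∀ x : M, a • x ∈ N := by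
  refine ⟨fun h ↦ h a (Ideal.mem_span_singleton_self a), fun h s hs x ↦ ?_⟩
  obtain ⟨c, rfl⟩ := Ideal.mem_span_singleton'.1 hs
  rw [mul_smul]
  exact N.smul_mem c (h x)

end Submodule

open Submodule in
theorem stmt_18_general {R M : Type*} [CommRing R] [IsPrincipalIdealRing R]
    [AddCommGroup M] [Module R M]
    (k n : ℕ) (N : Submodule R M) :
    (∀ (r : R) (m : M), r ^ k • m ∈ N →
        (∀ x : M, r ^ n • x ∈ N) ∨ r ^ (n - 1) • m ∈ N) ↔
    (∀ (I : Ideal R) (L : Submodule R M), I ^ k • L ≤ N →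
        (∀ s ∈ I ^ n, ∀ x : M, s • x ∈ N) ∨ I ^ (n - 1) • L ≤ N) := by
  constructor
  · intro h I L hIL
    obtain ⟨r, rfl⟩ : ∃ r, I = Ideal.span {r} := ⟨_, (Ideal.span_singleton_generator I).symm⟩
    simp only [Ideal.span_singleton_pow, ideal_span_singleton_smul_le_iff,
      forall_mem_ideal_span_singleton_smul_mem_iff] at hIL ⊢
    exact or_iff_not_imp_left.2 fun hr m hm ↦ (h r m (hIL m hm)).resolve_left hr
  · intro h r m hrm
    simpa only [Ideal.span_singleton_pow, ideal_span_singleton_smul_span_singleton_le_iff,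
      forall_mem_ideal_span_singleton_smul_mem_iff, hrm, true_imp_iff]
      using h (Ideal.span {r}) (R ∙ m)

/-- Over a PID, a proper submodule N is (k,n)-closed iff it is
strongly (k,n)-closed. -/
theorem stmt_18 {R M : Type*} [CommRing R] [IsDomain R] [IsPrincipalIdealRing R]
    [AddCommGroup M] [Module R M]
    (k n : ℕ) (hk : 0 < k) (hn : 0 < n) (N : Submodule R M) (hN : N ≠ ⊤) :
    (∀ (r : R) (m : M), r ^ k • m ∈ N →
        (∀ x : M, r ^ n • x ∈ N) ∨ r ^ (n - 1) • m ∈ N) ↔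
    (∀ (I : Ideal R) (L : Submodule R M), I ^ k • L ≤ N →
        (∀ s ∈ I ^ n, ∀ x : M, s • x ∈ N) ∨ I ^ (n - 1) • L ≤ N) :=
  stmt_18_general k n N
end

section
/- Let N be a (k,2)-closed submodule of an R-module M in which 2 is a unit. If I is an ideal of R with I^k • M ⊆ N, then I^2 ⊆ (N :ᵣ M); consequently N is a strongly (k,2)-closed submodule of M. -/
/-!
Since `2` is a unit, `a * b = 2⁻¹ ((a + b)² - a² - b²)` and
`a² = 2⁻¹ ((a + a₀)² + (a - a₀)²) - a₀²`. The first identity reduces `I² ⊆ J` to `a² ∈ J` for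
every `a ∈ I`. If `I • L ⊄ N`, pick `m₀ ∈ L` and `a₀ ∈ I` with `a₀ • m₀ ∉ N`; closedness applied
to `a^k • m₀ ∈ N` gives `a² ∈ (N :ᵣ M)` unless `a • m₀ ∈ N`, and in that case the second identity
finishes, because then neither `(a ± a₀) • m₀` lies in `N`. The first claim is the case `L = M`,
as `I • M ⊆ N` already gives `I² ⊆ I ⊆ (N :ᵣ M)`.
-/

namespace Ideal

variable {R : Type*} [CommRing R]

theorem pow_two_le_of_forall_sq_mem (h2 : IsUnit (2 : R)) {I J : Ideal R}
    (hsq : ∀ a ∈ I, a ^ 2 ∈ J) : I ^ 2 ≤ J := by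
  obtain ⟨c, hc⟩ := h2.exists_right_inv
  intro s hs
  rw [pow_two] at hs
  refine Submodule.mul_induction_on hs (fun a ha b hb => ?_) (fun _ _ => J.add_mem)
  have polarization : a * b = c * ((a + b) ^ 2 - a ^ 2 - b ^ 2) := by
    linear_combination (-(a * b)) * hc
  rw [polarization]
  exact J.mul_mem_left c (J.sub_mem (J.sub_mem (hsq _ (I.add_mem ha hb)) (hsq a ha)) (hsq b hb))

theorem sq_mem_of_forall_sq_mem_or_mem (h2 : IsUnit (2 : R)) {I J K : Ideal R}
    (hIJK : ∀ a ∈ I, a ^ 2 ∈ J ∨ a ∈ K) {a₀ : R} (ha₀I : a₀ ∈ I) (ha₀K : a₀ ∉ K) :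
    ∀ a ∈ I, a ^ 2 ∈ J := by
  obtain ⟨c, hc⟩ := h2.exists_right_inv
  have ha₀J : a₀ ^ 2 ∈ J := (hIJK a₀ ha₀I).resolve_right ha₀K
  intro a haI
  by_cases haK : a ∈ K
  · have hplus : (a + a₀) ^ 2 ∈ J := (hIJK _ (I.add_mem haI ha₀I)).resolve_right fun h =>
      ha₀K (by simpa using K.sub_mem h haK)
    have hminus : (a - a₀) ^ 2 ∈ J := (hIJK _ (I.sub_mem haI ha₀I)).resolve_right fun h =>
      ha₀K (by simpa using K.sub_mem haK h)
    have parallelogram : a ^ 2 = c * (a + a₀) ^ 2 + c * (a - a₀) ^ 2 - a₀ ^ 2 := by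
      linear_combination (-(a ^ 2 + a₀ ^ 2)) * hc
    rw [parallelogram]
    exact J.sub_mem (J.add_mem (J.mul_mem_left c hplus) (J.mul_mem_left c hminus)) ha₀J
  · exact (hIJK a haI).resolve_right haK

end Ideal

namespace Submodule

variable {R M : Type*} [CommRing R] [AddCommGroup M] [Module R M] {k : ℕ} {N : Submodule R M}

theorem pow_two_le_colon_or_smul_le (h2 : IsUnit (2 : R))
    (hclosed : ∀ (r : R) (m : M), r ^ k • m ∈ N → r ^ 2 ∈ N.colon Set.univ ∨ r • m ∈ N)
    {I : Ideal R} {L : Submodule R M} (hIL : I ^ k • L ≤ N) :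
    I ^ 2 ≤ N.colon Set.univ ∨ I • L ≤ N := by
  refine or_iff_not_imp_right.2 fun hIL' => ?_
  obtain ⟨a₀, ha₀I, m₀, hm₀L, ha₀m₀⟩ : ∃ a₀ ∈ I, ∃ m₀ ∈ L, a₀ • m₀ ∉ N := by
    simpa [Submodule.smul_le] using hIL'
  refine Ideal.pow_two_le_of_forall_sq_mem h2
    (Ideal.sq_mem_of_forall_sq_mem_or_mem (K := N.colon {m₀}) h2 (fun a ha => ?_) ha₀I
      (by rwa [mem_colon_singleton]))
  rw [mem_colon_singleton]
  exact hclosed a m₀ (hIL (smul_mem_smul (Ideal.pow_mem_pow ha k) hm₀L))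

end Submodule

theorem stmt_19_general {R M : Type*} [CommRing R] [AddCommGroup M] [Module R M]
    (h2 : IsUnit (2 : R)) (k : ℕ) (N : Submodule R M)
    (hclosed : ∀ (r : R) (m : M), r ^ k • m ∈ N →
        (∀ x : M, r ^ 2 • x ∈ N) ∨ r • m ∈ N) :
    (∀ I : Ideal R, I ^ k • (⊤ : Submodule R M) ≤ N →
        ∀ s ∈ I ^ 2, ∀ x : M, s • x ∈ N) ∧
    (∀ (I : Ideal R) (L : Submodule R M), I ^ k • L ≤ N →
        (∀ s ∈ I ^ 2, ∀ x : M, s • x ∈ N) ∨ I • L ≤ N) := by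
  have mem_colon_univ (r : R) : r ∈ N.colon Set.univ ↔ ∀ x : M, r • x ∈ N := by
    simp [Submodule.mem_colon]
  simp_rw [← mem_colon_univ] at hclosed ⊢
  have strongly := fun (I : Ideal R) (L : Submodule R M) (hIL : I ^ k • L ≤ N) =>
    Submodule.pow_two_le_colon_or_smul_le h2 hclosed hIL
  refine ⟨fun I hI => ?_, strongly⟩
  rcases strongly I ⊤ hI with hsq | hI
  · exact hsq
  · refine (Ideal.pow_le_self two_ne_zero).trans fun a ha => ?_
    rw [mem_colon_univ]
    exact fun x => hI (Submodule.smul_mem_smul ha trivial)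

/-- If 2 is a unit in R and N is a (k,2)-closed submodule of M,
then I^k • M ⊆ N implies I^2 ⊆ (N :ᵣ M), and N is strongly (k,2)-closed. -/
theorem stmt_19 {R M : Type*} [CommRing R] [Nontrivial R] [AddCommGroup M] [Module R M]
    (h2 : IsUnit (2 : R)) (k : ℕ) (hk : 0 < k) (N : Submodule R M) (hN : N ≠ ⊤)
    (hclosed : ∀ (r : R) (m : M), r ^ k • m ∈ N →
        (∀ x : M, r ^ 2 • x ∈ N) ∨ r • m ∈ N) :
    (∀ I : Ideal R, I ^ k • (⊤ : Submodule R M) ≤ N →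
        ∀ s ∈ I ^ 2, ∀ x : M, s • x ∈ N) ∧
    (∀ (I : Ideal R) (L : Submodule R M), I ^ k • L ≤ N →
        (∀ s ∈ I ^ 2, ∀ x : M, s • x ∈ N) ∨ I • L ≤ N) :=
  stmt_19_general h2 k N hclosed
end
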